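/- arXiv:2411.03155 — 5 statements merged into one kernel-verified Lean document; each statement's English description precedes it below -/
import Mathlib

section
/- If G is a nontrivial finite abelian group that is not cyclic, then its Schur multiplier (the second homology group H_2(G, ℤ) with trivial action) is nontrivial. -/
/-- The natural projection from the free group on the underlying set of `G` onto `G`. -/
def presProj (G : Type*) [Group G] : FreeGroup G →* G := FreeGroup.lift id

/-- The relation subgroup `R` of the free presentation `1 → R → F → G → 1`. -/
def relSub (G : Type*) [Group G] : Subgroup (FreeGroup G) := (presProj G).ker

/-- The numerator `R ⊓ [F, F]` in Hopf's formula. -/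
def hopfTop (G : Type*) [Group G] : Subgroup (FreeGroup G) :=
  relSub G ⊓ commutator (FreeGroup G)

/-- The denominator `[F, R]` in Hopf's formula, viewed inside `R ⊓ [F, F]`. -/
def hopfBot (G : Type*) [Group G] : Subgroup (hopfTop G) :=
  (⁅(⊤ : Subgroup (FreeGroup G)), relSub G⁆).subgroupOf (hopfTop G)

instance relSub_normal (G : Type*) [Group G] : (relSub G).Normal :=
  MonoidHom.normal_ker _

instance hopfBot_normal (G : Type*) [Group G] : (hopfBot G).Normal :=
  Subgroup.normal_subgroupOf

/-- The Schur multiplier `M(G) = H₂(G, ℤ)` of `G`, via Hopf's formula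
`M(G) = (R ⊓ [F, F]) / [F, R]` for a free presentation `G = F/R`. -/
def SchurMultiplier (G : Type*) [Group G] : Type _ := hopfTop G ⧸ hopfBot G

noncomputable instance (G : Type*) [Group G] : Group (SchurMultiplier G) :=
  inferInstanceAs (Group (hopfTop G ⧸ hopfBot G))

/-!
By Hopf's formula `M(G) = (R ⊓ [F, F]) / [F, R]`, a homomorphism `F → H` carrying `R` into the
centre of `H` kills `[F, R]` and so induces `M(G) → H`; for commuting `g, h` the class of
`⁅of g, of h⁆` is nontrivial as soon as its image is. A finite abelian group that is not cyclic has
two cyclic factors whose orders share a prime `p`, so it surjects onto `(ZMod p)²`. Lifting this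
surjection to the Heisenberg group over `ZMod p` sends `R` into the kernel of the projection onto
`(ZMod p)²`, which is central, and the commutator of lifts of the two basis vectors is a nontrivial
central element.
-/

open scoped commutatorElement

/-- Upper unitriangular matrices `[[1, a, c], [0, 1, b], [0, 0, 1]]` over `R`. -/
@[ext] structure Heisenberg (R : Type*) where
  a : R
  b : R
  c : R

namespace Heisenberg

variable {R : Type*} [CommRing R]

instance : Mul (Heisenberg R) := ⟨fun x y => ⟨x.a + y.a, x.b + y.b, x.c + y.c + x.a * y.b⟩⟩
instance : One (Heisenberg R) := ⟨⟨0, 0, 0⟩⟩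
instance : Inv (Heisenberg R) := ⟨fun x => ⟨-x.a, -x.b, -x.c + x.a * x.b⟩⟩

@[simp] lemma mul_a (x y : Heisenberg R) : (x * y).a = x.a + y.a := rfl
@[simp] lemma mul_b (x y : Heisenberg R) : (x * y).b = x.b + y.b := rfl
@[simp] lemma mul_c (x y : Heisenberg R) : (x * y).c = x.c + y.c + x.a * y.b := rfl
@[simp] lemma one_a : (1 : Heisenberg R).a = 0 := rfl
@[simp] lemma one_b : (1 : Heisenberg R).b = 0 := rfl
@[simp] lemma one_c : (1 : Heisenberg R).c = 0 := rfl
@[simp] lemma inv_a (x : Heisenberg R) : x⁻¹.a = -x.a := rfl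
@[simp] lemma inv_b (x : Heisenberg R) : x⁻¹.b = -x.b := rfl
@[simp] lemma inv_c (x : Heisenberg R) : x⁻¹.c = -x.c + x.a * x.b := rfl

instance : Group (Heisenberg R) where
  mul_assoc x y z := by ext <;> simp <;> ring
  one_mul x := by ext <;> simp
  mul_one x := by ext <;> simp
  inv_mul_cancel x := by ext <;> simp

def proj : Heisenberg R →* Multiplicative (R × R) where
  toFun x := Multiplicative.ofAdd (x.a, x.b)
  map_one' := rfl
  map_mul' _ _ := rfl

def ofPair (v : R × R) : Heisenberg R := ⟨v.1, v.2, 0⟩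

@[simp] lemma proj_ofPair (v : R × R) : proj (ofPair v) = Multiplicative.ofAdd v := rfl

lemma mem_center_of_proj_eq_one {x : Heisenberg R} (hx : proj x = 1) :
    x ∈ Subgroup.center (Heisenberg R) := by
  obtain ⟨ha, hb⟩ : x.a = 0 ∧ x.b = 0 := Prod.ext_iff.mp (ofAdd_eq_one.mp hx)
  refine Subgroup.mem_center_iff.mpr fun y => ?_
  ext <;> simp [ha, hb, add_comm]

lemma commutatorElement_eq (x y : Heisenberg R) :
    ⁅x, y⁆ = ⟨0, 0, x.a * y.b - x.b * y.a⟩ := by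
  change x * y * x⁻¹ * y⁻¹ = _
  ext <;> simp only [mul_a, mul_b, mul_c, inv_a, inv_b, inv_c] <;> ring

lemma commutatorElement_ofPair_ne_one {u v : R × R} (h : u.1 * v.2 - u.2 * v.1 ≠ 0) :
    ⁅ofPair u, ofPair v⁆ ≠ 1 := by
  rw [commutatorElement_eq]
  exact fun h1 => h (congrArg c h1)

end Heisenberg

namespace SchurMultiplier

variable {G H : Type*} [Group G] [Group H]

lemma commutatorElement_mem_hopfTop {g h : G} (hgh : Commute g h) :
    ⁅FreeGroup.of g, FreeGroup.of h⁆ ∈ hopfTop G := by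
  refine ⟨?_, Subgroup.commutator_mem_commutator (Subgroup.mem_top _) (Subgroup.mem_top _)⟩
  change presProj G ⁅FreeGroup.of g, FreeGroup.of h⁆ = 1
  rw [map_commutatorElement, presProj, FreeGroup.lift_apply_of, FreeGroup.lift_apply_of]
  exact commutatorElement_eq_one_iff_commute.mpr hgh

lemma commutator_top_relSub_le_ker (σ : FreeGroup G →* H)
    (hσ : ∀ r ∈ relSub G, σ r ∈ Subgroup.center H) :
    ⁅(⊤ : Subgroup (FreeGroup G)), relSub G⁆ ≤ σ.ker := by
  rw [Subgroup.commutator_le]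
  intro f _ r hr
  rw [MonoidHom.mem_ker, map_commutatorElement, commutatorElement_eq_one_iff_commute]
  exact Subgroup.mem_center_iff.mp (hσ r hr) (σ f)

def lift (σ : FreeGroup G →* H) (hσ : ∀ r ∈ relSub G, σ r ∈ Subgroup.center H) :
    SchurMultiplier G →* H :=
  QuotientGroup.lift (hopfBot G) (σ.comp (hopfTop G).subtype) fun _ hx =>
    commutator_top_relSub_le_ker σ hσ (Subgroup.mem_subgroupOf.mp hx)

theorem nontrivial_of_commute_of_map_ne_one (σ : FreeGroup G →* H)
    (hσ : ∀ r ∈ relSub G, σ r ∈ Subgroup.center H) {g h : G} (hgh : Commute g h)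
    (hne : ⁅σ (FreeGroup.of g), σ (FreeGroup.of h)⁆ ≠ 1) :
    Nontrivial (SchurMultiplier G) := by
  let x : SchurMultiplier G := QuotientGroup.mk ⟨_, commutatorElement_mem_hopfTop hgh⟩
  have hx : lift σ hσ x = ⁅σ (FreeGroup.of g), σ (FreeGroup.of h)⁆ := map_commutatorElement σ _ _
  exact nontrivial_of_ne x 1 fun h1 => hne (by rw [← hx, h1, map_one])

theorem nontrivial_of_commute_of_det_ne_zero {R : Type*} [CommRing R]
    (q : G →* Multiplicative (R × R)) {g h : G} (hgh : Commute g h)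
    (hdet : (q g).toAdd.1 * (q h).toAdd.2 - (q g).toAdd.2 * (q h).toAdd.1 ≠ 0) :
    Nontrivial (SchurMultiplier G) := by
  let σ : FreeGroup G →* Heisenberg R :=
    FreeGroup.lift fun g => Heisenberg.ofPair (q g).toAdd
  have hproj : Heisenberg.proj.comp σ = q.comp (presProj G) :=
    FreeGroup.ext_hom _ _ fun g => by simp [σ, presProj]
  have hσ : ∀ r ∈ relSub G, σ r ∈ Subgroup.center (Heisenberg R) := fun r hr =>
    Heisenberg.mem_center_of_proj_eq_one <| by
      rw [← MonoidHom.comp_apply, hproj, MonoidHom.comp_apply, MonoidHom.mem_ker.mp hr, map_one]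
  refine nontrivial_of_commute_of_map_ne_one σ hσ hgh ?_
  simpa only [σ, FreeGroup.lift_apply_of] using Heisenberg.commutatorElement_ofPair_ne_one hdet

theorem nontrivial_of_surjective {G : Type*} [CommGroup G] {R : Type*} [CommRing R]
    [Nontrivial R] (q : G →* Multiplicative (R × R)) (hq : Function.Surjective q) :
    Nontrivial (SchurMultiplier G) := by
  obtain ⟨g, hg⟩ := hq (Multiplicative.ofAdd (1, 0))
  obtain ⟨h, hh⟩ := hq (Multiplicative.ofAdd (0, 1))
  exact nontrivial_of_commute_of_det_ne_zero q (Commute.all g h) (by simp [hg, hh])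

end SchurMultiplier

open scoped Function in
lemma isAddCyclic_pi_zmod_of_pairwise_coprime {ι : Type*} [Fintype ι] (n : ι → ℕ)
    (h : Pairwise (Nat.Coprime on n)) : IsAddCyclic (∀ i, ZMod (n i)) :=
  isAddCyclic_of_surjective (ZMod.prodEquivPi n h).toAddMonoidHom (ZMod.prodEquivPi n h).surjective

lemma surjective_castHom_pair {ι : Type*} [DecidableEq ι] {n : ι → ℕ} {i j : ι} (hij : i ≠ j)
    {p : ℕ} (hi : p ∣ n i) (hj : p ∣ n j) :
    Function.Surjective fun x : ∀ k, ZMod (n k) =>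
      (ZMod.castHom hi (ZMod p) (x i), ZMod.castHom hj (ZMod p) (x j)) := by
  rintro ⟨u, v⟩
  obtain ⟨u, rfl⟩ := ZMod.ringHom_surjective (ZMod.castHom hi (ZMod p)) u
  obtain ⟨v, rfl⟩ := ZMod.ringHom_surjective (ZMod.castHom hj (ZMod p)) v
  exact ⟨Pi.single i u + Pi.single j v, by simp [hij, hij.symm]⟩

lemma exists_surjective_zmod_prod_of_not_isAddCyclic {A : Type*} [AddCommGroup A] [Finite A]
    (h : ¬ IsAddCyclic A) : ∃ p, p.Prime ∧ ∃ f : A →+ ZMod p × ZMod p, Function.Surjective f := by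
  classical
  obtain ⟨ι, _, n, -, ⟨e⟩⟩ := AddCommGroup.equiv_directSum_zmod_of_finite' A
  let e' := e.trans (DirectSum.addEquivProd _)
  obtain ⟨i, j, hij, hnot⟩ : ∃ i j, i ≠ j ∧ ¬ (n i).Coprime (n j) := by
    by_contra! hcop
    exact h (e'.isAddCyclic.mpr (isAddCyclic_pi_zmod_of_pairwise_coprime n hcop))
  obtain ⟨p, hp, hi, hj⟩ := Nat.Prime.not_coprime_iff_dvd.mp hnot
  let f : (∀ k, ZMod (n k)) →+ ZMod p × ZMod p :=
    ((ZMod.castHom hi (ZMod p)).toAddMonoidHom.comp (Pi.evalAddMonoidHom _ i)).prod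
      ((ZMod.castHom hj (ZMod p)).toAddMonoidHom.comp (Pi.evalAddMonoidHom _ j))
  exact ⟨p, hp, f.comp e'.toAddMonoidHom, (surjective_castHom_pair hij hi hj).comp e'.surjective⟩

lemma exists_surjective_zmod_prod_of_not_isCyclic {G : Type*} [CommGroup G] [Finite G]
    (h : ¬ IsCyclic G) :
    ∃ p, p.Prime ∧ ∃ q : G →* Multiplicative (ZMod p × ZMod p), Function.Surjective q := by
  obtain ⟨p, hp, f, hf⟩ :=
    exists_surjective_zmod_prod_of_not_isAddCyclic (A := Additive G)
      fun hA => h (isAddCyclic_additive_iff.mp hA)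
  exact ⟨p, hp, f.toMultiplicativeRight, hf.comp Additive.ofMul.surjective⟩

theorem schurMultiplier_nontrivial_of_not_cyclic_general (G : Type*) [CommGroup G] [Finite G]
    (h : ¬ IsCyclic G) : Nontrivial (SchurMultiplier G) := by
  obtain ⟨p, hp, q, hq⟩ := exists_surjective_zmod_prod_of_not_isCyclic h
  have : Fact p.Prime := ⟨hp⟩
  exact SchurMultiplier.nontrivial_of_surjective q hq

/-- a nontrivial finite abelian group that is not cyclic has
nontrivial Schur multiplier. -/
theorem schurMultiplier_nontrivial_of_not_cyclic (G : Type*) [CommGroup G] [Finite G]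
    [Nontrivial G] (h : ¬ IsCyclic G) : Nontrivial (SchurMultiplier G) :=
  schurMultiplier_nontrivial_of_not_cyclic_general G h
end

section
/- If G is a finite abelian group isomorphic to ℤ/n₁ℤ ⊕ ℤ/n₂ℤ ⊕ … ⊕ ℤ/n_kℤ with n_{i+1} ∣ n_i for all i and k ≥ 2, then the Schur multiplier M(G) is isomorphic to ℤ/n₂ℤ ⊕ (ℤ/n₃ℤ)² ⊕ … ⊕ (ℤ/n_kℤ)^{k-1}. -/
open scoped commutatorElement

section CentralCommutators
variable {H : Type*} [Group H] {a b c : H}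

theorem commutatorElement_mul_left_of_mem_center (h : ⁅b, c⁆ ∈ Subgroup.center H) :
    ⁅a * b, c⁆ = ⁅a, c⁆ * ⁅b, c⁆ := by
  rw [commutatorElement_mul_left_eq_conj_mul, Subgroup.mem_center_iff.1 h a, mul_inv_cancel_right,
    Subgroup.mem_center_iff.1 h]

theorem commutatorElement_mul_right_of_mem_center (h : ⁅a, c⁆ ∈ Subgroup.center H) :
    ⁅a, b * c⁆ = ⁅a, b⁆ * ⁅a, c⁆ := by
  rw [commutatorElement_mul_right_eq_mul_conj, mul_assoc _ b, Subgroup.mem_center_iff.1 h b,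
    mul_assoc, mul_inv_cancel_right]

theorem commutatorElement_mul_left_of_commute (h : ∀ z, Commute b z) : ⁅a * b, c⁆ = ⁅a, c⁆ := by
  rw [commutatorElement_mul_left_eq_conj_mul, commutatorElement_eq_one_iff_commute.2 (h c), mul_one,
    mul_inv_cancel, one_mul]

theorem commutatorElement_mul_right_of_commute (h : ∀ z, Commute c z) : ⁅a, b * c⁆ = ⁅a, b⁆ := by
  rw [commutatorElement_mul_right_eq_mul_conj, commutatorElement_eq_one_iff_commute.2 (h a).symm,
    mul_one, mul_inv_cancel_right]

end CentralCommutators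

theorem MonoidHom.apply_apply_mem_of_closure_eq_top {M N P : Type*} [Group M] [Group N]
    [CommGroup P] (B : M →* N →* P) {s : Set M} {t : Set N} (hs : Subgroup.closure s = ⊤)
    (ht : Subgroup.closure t = ⊤) {S : Subgroup P} (hB : ∀ a ∈ s, ∀ b ∈ t, B a b ∈ S) (x : M)
    (y : N) : B x y ∈ S := by
  have hsy : ∀ a ∈ s, ∀ y, B a y ∈ S := fun a ha y =>
    (Subgroup.closure_le (S.comap (B a))).2 (hB a ha) (ht ▸ Subgroup.mem_top y)
  exact (Subgroup.closure_le (S.comap (B.flip y))).2 (fun a ha => hsy a ha y)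
    (hs ▸ Subgroup.mem_top x)

theorem Multiplicative.ofAdd_intCast_eq_zpow {m : ℕ} (z : ℤ) :
    Multiplicative.ofAdd (z : ZMod m) = Multiplicative.ofAdd 1 ^ z := by
  rw [← ofAdd_zsmul, zsmul_one]

theorem MonoidHom.ext_mzmod {m : ℕ} {M : Type*} [Group M] {f g : Multiplicative (ZMod m) →* M}
    (h : f (.ofAdd 1) = g (.ofAdd 1)) : f = g := by
  refine MonoidHom.ext fun x => ?_
  obtain ⟨z, hz⟩ := ZMod.intCast_surjective (Multiplicative.toAdd x)
  rw [← ofAdd_toAdd x, ← hz, Multiplicative.ofAdd_intCast_eq_zpow, map_zpow, map_zpow, h]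

noncomputable def MonoidHom.mzmodOfPowEqOne {A : Type*} [CommGroup A] (m : ℕ) (a : A)
    (ha : a ^ m = 1) : Multiplicative (ZMod m) →* A :=
  AddMonoidHom.toMultiplicativeLeft <| ZMod.lift m
    ⟨zmultiplesHom (Additive A) (.ofMul a), by simp [← ofMul_pow, ha]⟩

theorem MonoidHom.mzmodOfPowEqOne_ofAdd_one {A : Type*} [CommGroup A] (m : ℕ) (a : A)
    (ha : a ^ m = 1) : MonoidHom.mzmodOfPowEqOne m a ha (.ofAdd 1) = a := by
  simp [MonoidHom.mzmodOfPowEqOne, ← Int.cast_one (R := ZMod m), -Int.cast_one, ZMod.lift_coe]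

theorem Pi.monoidHomMulEquiv_symm_apply_mulSingle {ι : Type*} [Fintype ι] [DecidableEq ι]
    {M : ι → Type*} [∀ i, CommMonoid (M i)] {M' : Type*} [CommMonoid M'] (f : ∀ i, M i →* M')
    (i : ι) (x : M i) : (Pi.monoidHomMulEquiv M M').symm f (Pi.mulSingle i x) = f i x :=
  DFunLike.congr_fun (congrFun ((Pi.monoidHomMulEquiv M M').apply_symm_apply f) i) x

/-- A bimultiplicative `ω` is a 2-cocycle; this is the central extension of `G` by `A` it
defines. -/
@[ext]
structure CocycleExt {G A : Type*} [Group G] [CommGroup A] (ω : G →* G →* A) where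
  fst : G
  snd : A

namespace CocycleExt

variable {G A : Type*} [Group G] [CommGroup A] {ω : G →* G →* A}

instance : One (CocycleExt ω) := ⟨⟨1, 1⟩⟩
instance : Mul (CocycleExt ω) := ⟨fun x y => ⟨x.fst * y.fst, x.snd * y.snd * ω x.fst y.fst⟩⟩
instance : Inv (CocycleExt ω) := ⟨fun x => ⟨x.fst⁻¹, x.snd⁻¹ * ω x.fst x.fst⟩⟩

@[simp] theorem fst_one : (1 : CocycleExt ω).fst = 1 := rfl
@[simp] theorem snd_one : (1 : CocycleExt ω).snd = 1 := rfl
@[simp] theorem fst_mul (x y : CocycleExt ω) : (x * y).fst = x.fst * y.fst := rfl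
@[simp] theorem snd_mul (x y : CocycleExt ω) : (x * y).snd = x.snd * y.snd * ω x.fst y.fst := rfl
@[simp] theorem fst_inv (x : CocycleExt ω) : x⁻¹.fst = x.fst⁻¹ := rfl
@[simp] theorem snd_inv (x : CocycleExt ω) : x⁻¹.snd = x.snd⁻¹ * ω x.fst x.fst := rfl

instance : Group (CocycleExt ω) :=
  Group.ofLeftAxioms
    (fun x y z => by
      ext
      · exact mul_assoc _ _ _
      · simp only [snd_mul, fst_mul, map_mul, MonoidHom.mul_apply, mul_assoc, mul_left_comm,
          mul_comm])
    (fun x => by ext <;> simp)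
    (fun x => by
      ext
      · exact inv_mul_cancel _
      · simp only [snd_mul, snd_inv, fst_inv, snd_one, map_inv, MonoidHom.inv_apply]
        rw [mul_right_comm _ (ω _ _), inv_mul_cancel, one_mul, mul_inv_cancel])

def fstHom : CocycleExt ω →* G where
  toFun := fst
  map_one' := rfl
  map_mul' _ _ := rfl

theorem commute_of_fst_eq_one {x : CocycleExt ω} (hx : x.fst = 1) (y : CocycleExt ω) :
    Commute x y := by
  ext <;> simp [hx, mul_comm]

noncomputable def ofFreeGroup : FreeGroup G →* CocycleExt ω := FreeGroup.lift fun g => ⟨g, 1⟩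

theorem fst_ofFreeGroup (w : FreeGroup G) : (ofFreeGroup w : CocycleExt ω).fst = presProj G w := by
  have : (fstHom (ω := ω)).comp ofFreeGroup = presProj G := FreeGroup.ext_hom _ _ fun _ => rfl
  exact DFunLike.congr_fun this w

theorem commutator_le_ker_ofFreeGroup :
    ⁅(⊤ : Subgroup (FreeGroup G)), relSub G⁆ ≤ (ofFreeGroup (ω := ω)).ker := by
  rw [Subgroup.commutator_le]
  intro x _ r hr
  rw [MonoidHom.mem_ker, map_commutatorElement, commutatorElement_eq_one_iff_commute]
  exact (commute_of_fst_eq_one (by rwa [fst_ofFreeGroup]) _).symm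

end CocycleExt

namespace SchurMultiplier

section Group
variable {G A : Type*} [Group G] [CommGroup A]

theorem hopfTop_le_relSub : hopfTop G ≤ relSub G := inf_le_left

noncomputable def mk : hopfTop G →* SchurMultiplier G := QuotientGroup.mk' (hopfBot G)

theorem mk_surjective : Function.Surjective (mk (G := G)) := QuotientGroup.mk'_surjective _

variable (G) in
abbrev FreeCentralExt : Type _ := FreeGroup G ⧸ ⁅(⊤ : Subgroup (FreeGroup G)), relSub G⁆

noncomputable def toFreeCentralExt : SchurMultiplier G →* FreeCentralExt G :=
  QuotientGroup.lift _ ((QuotientGroup.mk' _).comp (hopfTop G).subtype) fun _ hw => by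
    simpa [QuotientGroup.eq_one_iff, hopfBot, Subgroup.mem_subgroupOf] using hw

theorem toFreeCentralExt_injective : Function.Injective (toFreeCentralExt (G := G)) := by
  refine (QuotientGroup.injective_lift_iff _ _ _).2 ?_
  ext w
  simp [hopfBot, Subgroup.mem_subgroupOf, QuotientGroup.eq_one_iff]

theorem commute_mk_of_mem_relSub {r : FreeGroup G} (hr : r ∈ relSub G)
    (z : FreeCentralExt G) : Commute (r : FreeCentralExt G) z := by
  obtain ⟨x, rfl⟩ := QuotientGroup.mk'_surjective _ z
  rw [← QuotientGroup.mk'_apply, ← commutatorElement_eq_one_iff_commute, ← map_commutatorElement,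
    QuotientGroup.mk'_apply, QuotientGroup.eq_one_iff, Subgroup.commutator_comm]
  exact Subgroup.commutator_mem_commutator hr (Subgroup.mem_top x)

noncomputable instance : CommGroup (SchurMultiplier G) where
  mul_comm q q' := toFreeCentralExt_injective <| by
    obtain ⟨w, rfl⟩ := mk_surjective q
    rw [map_mul, map_mul]
    exact commute_mk_of_mem_relSub (hopfTop_le_relSub w.2) _

/-- Induced by `F → CocycleExt ω`, which maps `R ⊓ [F, F]` into the central copy of `A` and kills
`[F, R]`. -/
noncomputable def schurLift (ω : G →* G →* A) : SchurMultiplier G →* A :=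
  QuotientGroup.lift (hopfBot G)
    (MonoidHom.mk' (fun w : hopfTop G => (CocycleExt.ofFreeGroup (ω := ω) w).snd) fun w w' => by
      have hw : presProj G w = 1 := hopfTop_le_relSub w.2
      rw [Subgroup.coe_mul, map_mul, CocycleExt.snd_mul, CocycleExt.fst_ofFreeGroup, hw, map_one,
        MonoidHom.one_apply, mul_one])
    fun w hw => by
      rw [MonoidHom.mem_ker, MonoidHom.mk'_apply,
        CocycleExt.commutator_le_ker_ofFreeGroup (Subgroup.mem_subgroupOf.1 hw)]
      rfl

theorem schurLift_mk (ω : G →* G →* A) (w : hopfTop G) :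
    schurLift ω (mk w) = (CocycleExt.ofFreeGroup (ω := ω) w).snd := rfl

end Group

section CommGroup
variable {G A : Type*} [CommGroup G] [CommGroup A]

theorem commutator_le_relSub : commutator (FreeGroup G) ≤ relSub G := by
  rw [commutator_def, Subgroup.commutator_le]
  intro a _ b _
  rw [relSub, MonoidHom.mem_ker, map_commutatorElement, commutatorElement_eq_one_iff_mul_comm,
    mul_comm]

theorem hopfTop_eq_commutator : hopfTop G = commutator (FreeGroup G) :=
  inf_eq_right.2 commutator_le_relSub

theorem commutatorElement_mem_hopfTop_s1 (x y : FreeGroup G) : ⁅x, y⁆ ∈ hopfTop G := by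
  rw [hopfTop_eq_commutator]
  exact Subgroup.commutator_mem_commutator (Subgroup.mem_top x) (Subgroup.mem_top y)

noncomputable def commClass (x y : FreeGroup G) : SchurMultiplier G :=
  mk ⟨⁅x, y⁆, commutatorElement_mem_hopfTop_s1 x y⟩

theorem toFreeCentralExt_commClass (x y : FreeGroup G) :
    toFreeCentralExt (commClass x y) = ⁅(x : FreeCentralExt G), (y : FreeCentralExt G)⁆ :=
  rfl

theorem commutatorElement_mem_center (p q : FreeCentralExt G) : ⁅p, q⁆ ∈ Subgroup.center _ := by
  obtain ⟨x, rfl⟩ := QuotientGroup.mk'_surjective _ p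
  obtain ⟨y, rfl⟩ := QuotientGroup.mk'_surjective _ q
  rw [← map_commutatorElement]
  have hxy : ⁅x, y⁆ ∈ relSub G := commutator_le_relSub (commutatorElement_mem_hopfTop_s1 x y).2
  exact Subgroup.mem_center_iff.2 fun z => (commute_mk_of_mem_relSub hxy z).eq.symm

theorem commClass_mul_left (x x' y : FreeGroup G) :
    commClass (x * x') y = commClass x y * commClass x' y :=
  toFreeCentralExt_injective <| by
    simp only [map_mul, toFreeCentralExt_commClass, QuotientGroup.mk_mul]
    rw [commutatorElement_mul_left_of_mem_center (commutatorElement_mem_center _ _)]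

theorem commClass_mul_right (x y y' : FreeGroup G) :
    commClass x (y * y') = commClass x y * commClass x y' :=
  toFreeCentralExt_injective <| by
    simp only [map_mul, toFreeCentralExt_commClass, QuotientGroup.mk_mul]
    rw [commutatorElement_mul_right_of_mem_center (commutatorElement_mem_center _ _)]

theorem commClass_swap (x y : FreeGroup G) : commClass y x = (commClass x y)⁻¹ :=
  toFreeCentralExt_injective <| by
    simp only [map_inv, toFreeCentralExt_commClass, commutatorElement_inv]

/-- Modulo `[F, R]`, elements of `R` are central, so `commClass x y` only sees `x` and `y` modulo
`R`. -/
theorem commClass_congr {x x' y y' : FreeGroup G} (hx : presProj G x = presProj G x')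
    (hy : presProj G y = presProj G y') : commClass x y = commClass x' y' := by
  have hrel : ∀ {z z' : FreeGroup G}, presProj G z = presProj G z' → z'⁻¹ * z ∈ relSub G :=
    fun h => by rw [relSub, MonoidHom.mem_ker, map_mul, map_inv, h, inv_mul_cancel]
  obtain ⟨r, hr, rfl⟩ : ∃ r ∈ relSub G, x = x' * r := ⟨x'⁻¹ * x, hrel hx, by group⟩
  obtain ⟨s, hs, rfl⟩ : ∃ s ∈ relSub G, y = y' * s := ⟨y'⁻¹ * y, hrel hy, by group⟩
  apply toFreeCentralExt_injective
  rw [toFreeCentralExt_commClass, toFreeCentralExt_commClass, QuotientGroup.mk_mul,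
    QuotientGroup.mk_mul, commutatorElement_mul_left_of_commute (commute_mk_of_mem_relSub hr),
    commutatorElement_mul_right_of_commute (commute_mk_of_mem_relSub hs)]

noncomputable def commPairing : G →* G →* SchurMultiplier G :=
  MonoidHom.mk'
    (fun g => MonoidHom.mk' (fun h => commClass (.of g) (.of h)) fun h h' => by
      rw [← commClass_mul_right]
      exact commClass_congr rfl (by simp [presProj]))
    fun g g' => by
      ext h
      rw [MonoidHom.mul_apply, MonoidHom.mk'_apply, MonoidHom.mk'_apply, MonoidHom.mk'_apply,
        ← commClass_mul_left]
      exact commClass_congr (by simp [presProj]) rfl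

theorem commPairing_apply (g h : G) : commPairing g h = commClass (.of g) (.of h) := rfl

theorem commClass_eq_commPairing (x y : FreeGroup G) :
    commClass x y = commPairing (presProj G x) (presProj G y) :=
  commClass_congr (by simp [presProj]) (by simp [presProj])

theorem commPairing_self (g : G) : commPairing g g = 1 :=
  toFreeCentralExt_injective <| by
    rw [commPairing_apply, toFreeCentralExt_commClass, commutatorElement_self, map_one]

theorem commPairing_swap (g h : G) : commPairing h g = (commPairing g h)⁻¹ := commClass_swap _ _

theorem closure_range_commPairing :
    Subgroup.closure (Set.range fun p : G × G => commPairing p.1 p.2) = ⊤ := by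
  set S := Subgroup.closure (Set.range fun p : G × G => commPairing p.1 p.2)
  have hcomm : commutator (FreeGroup G) ≤ (S.comap mk).map (hopfTop G).subtype := by
    rw [commutator_eq_closure, Subgroup.closure_le]
    rintro _ ⟨x, y, rfl⟩
    refine ⟨⟨⁅x, y⁆, commutatorElement_mem_hopfTop_s1 x y⟩, Subgroup.subset_closure ?_, rfl⟩
    exact ⟨(presProj G x, presProj G y), (commClass_eq_commPairing x y).symm⟩
  refine eq_top_iff.2 fun q _ => ?_
  obtain ⟨w, rfl⟩ := mk_surjective q
  have hw : (w : FreeGroup G) ∈ commutator (FreeGroup G) := hopfTop_eq_commutator (G := G) ▸ w.2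
  exact (Subgroup.mem_map_iff_mem (Subgroup.subtype_injective _)).1 (hcomm hw)

theorem schurLift_commPairing (ω : G →* G →* A) (g h : G) :
    schurLift ω (commPairing g h) = ω g h / ω h g := by
  rw [commPairing_apply, commClass, schurLift_mk, map_commutatorElement]
  simp [commutatorElement_def, CocycleExt.ofFreeGroup, div_eq_mul_inv]

end CommGroup

end SchurMultiplier

section Triangle

variable {k : ℕ} (n : Fin k → ℕ)

abbrev ZModPi : Type := ∀ i : Fin k, Multiplicative (ZMod (n i))

abbrev ZModTriangle : Type := ∀ i : Fin k, Fin i.val → Multiplicative (ZMod (n i))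

theorem dvd_of_le_of_succ_dvd
    (hdvd : ∀ (i : ℕ) (hi : i + 1 < k), n ⟨i + 1, hi⟩ ∣ n ⟨i, Nat.lt_of_succ_lt hi⟩)
    {i j : Fin k} (hji : j ≤ i) : n i ∣ n j := by
  obtain ⟨d, hd⟩ := Nat.exists_eq_add_of_le hji
  induction d generalizing i with
  | zero => rw [Fin.ext hd]
  | succ d ih =>
    have hlt : j.val + d + 1 < k := hd ▸ i.2
    rw [show i = ⟨j.val + d + 1, hlt⟩ from Fin.ext hd]
    exact (hdvd _ hlt).trans (ih (Fin.mk_le_mk.2 (Nat.le_add_right _ _)) rfl)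

def ZModPi.gen (i : Fin k) : ZModPi n := Pi.mulSingle i (.ofAdd 1)

variable {n}

theorem ZModPi.closure_range_gen : Subgroup.closure (Set.range (ZModPi.gen n)) = ⊤ := by
  refine eq_top_iff.2 fun p _ => Subgroup.pi_mem_of_mulSingle_mem p fun i => ?_
  obtain ⟨z, hz⟩ := ZMod.intCast_surjective (Multiplicative.toAdd (p i))
  rw [← ofAdd_toAdd (p i), ← hz, Multiplicative.ofAdd_intCast_eq_zpow, Pi.mulSingle_zpow]
  exact zpow_mem (Subgroup.subset_closure (Set.mem_range_self i)) z

theorem ZModPi.gen_pow (i : Fin k) : ZModPi.gen n i ^ n i = 1 := by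
  rw [ZModPi.gen, ← Pi.mulSingle_pow, ← ofAdd_nsmul, nsmul_one, ZMod.natCast_self, ofAdd_zero,
    Pi.mulSingle_one]

/-- `ω(p, q)_{i, j} = p_j q_i ∈ ℤ/n_i` for `j < i`, with `p_j ∈ ℤ/n_j` reduced mod `n_i ∣ n_j`. -/
def triangleCocycle (hn : ∀ {i j : Fin k}, j ≤ i → n i ∣ n j) :
    ZModPi n →* ZModPi n →* ZModTriangle n :=
  MonoidHom.mk'
    (fun p => MonoidHom.mk'
      (fun q i j => .ofAdd (ZMod.castHom (hn (j := Fin.castLE i.2.le j) j.2.le) (ZMod (n i))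
        (p (Fin.castLE i.2.le j)).toAdd * (q i).toAdd))
      fun q q' => by funext i j; simp [mul_add])
    fun p p' => MonoidHom.ext fun q => by
      funext i j
      simp only [MonoidHom.mk'_apply, MonoidHom.mul_apply, Pi.mul_apply, toAdd_mul, map_add,
        add_mul, ofAdd_add]

theorem triangleCocycle_gen_gen (hn : ∀ {i j : Fin k}, j ≤ i → n i ∣ n j) (a b : Fin k) :
    triangleCocycle hn (ZModPi.gen n a) (ZModPi.gen n b) =
      if h : a < b then Pi.mulSingle b (Pi.mulSingle ⟨a, h⟩ (.ofAdd 1)) else 1 := by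
  funext i j
  simp only [triangleCocycle, ZModPi.gen, MonoidHom.mk'_apply]
  split_ifs with hab
  · rcases eq_or_ne i b with rfl | hib
    · rcases eq_or_ne (Fin.castLE i.2.le j) a with rfl | hja
      · simp [ZMod.cast_one (hn hab.le)]
      · have hj : j ≠ ⟨a, hab⟩ := fun h => hja (Fin.ext (by simp [h]))
        simp [Pi.mulSingle_eq_of_ne hja, Pi.mulSingle_eq_of_ne hj]
    · simp [Pi.mulSingle_eq_of_ne hib]
  · rcases eq_or_ne i b with rfl | hib
    · have hja : Fin.castLE i.2.le j ≠ a := fun h => hab (h ▸ j.2)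
      simp [Pi.mulSingle_eq_of_ne hja]
    · simp [Pi.mulSingle_eq_of_ne hib]

end Triangle

section Abelian

open SchurMultiplier

variable {k : ℕ} {n : Fin k → ℕ} {G : Type*} [CommGroup G] (e : G ≃* ZModPi n)

noncomputable def schurGen (i : Fin k) (j : Fin i.val) : SchurMultiplier G :=
  commPairing (e.symm (ZModPi.gen n (Fin.castLE i.2.le j))) (e.symm (ZModPi.gen n i))

theorem schurGen_pow (i : Fin k) (j : Fin i.val) : schurGen e i j ^ n i = 1 := by
  rw [schurGen, ← map_pow, ← map_pow, ZModPi.gen_pow, map_one, map_one]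

noncomputable def triangleToSchur : ZModTriangle n →* SchurMultiplier G :=
  (Pi.monoidHomMulEquiv _ _).symm fun i => (Pi.monoidHomMulEquiv _ _).symm fun j =>
    MonoidHom.mzmodOfPowEqOne (n i) (schurGen e i j) (schurGen_pow e i j)

theorem triangleToSchur_mulSingle (i : Fin k) (j : Fin i.val) :
    triangleToSchur e (Pi.mulSingle i (Pi.mulSingle j (.ofAdd 1))) = schurGen e i j := by
  rw [triangleToSchur, Pi.monoidHomMulEquiv_symm_apply_mulSingle,
    Pi.monoidHomMulEquiv_symm_apply_mulSingle, MonoidHom.mzmodOfPowEqOne_ofAdd_one]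

theorem commPairing_symm_gen_mem_range (a b : Fin k) :
    commPairing (e.symm (ZModPi.gen n a)) (e.symm (ZModPi.gen n b)) ∈
      (triangleToSchur e).range := by
  rcases lt_trichotomy a b with hab | rfl | hba
  · exact ⟨_, triangleToSchur_mulSingle e b ⟨a, hab⟩⟩
  · rw [commPairing_self]
    exact one_mem _
  · rw [commPairing_swap]
    exact inv_mem ⟨_, triangleToSchur_mulSingle e a ⟨b, hba⟩⟩

theorem triangleToSchur_surjective : Function.Surjective (triangleToSchur e) := by
  refine MonoidHom.range_eq_top.1 <| eq_top_iff.2 <| closure_range_commPairing (G := G) ▸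
    (Subgroup.closure_le _).2 ?_
  rintro _ ⟨⟨g, h⟩, rfl⟩
  rw [← e.symm_apply_apply g, ← e.symm_apply_apply h]
  refine MonoidHom.apply_apply_mem_of_closure_eq_top
    ((commPairing.comp e.symm.toMonoidHom).compl₂ e.symm.toMonoidHom)
    ZModPi.closure_range_gen ZModPi.closure_range_gen ?_ (e g) (e h)
  rintro _ ⟨a, rfl⟩ _ ⟨b, rfl⟩
  exact commPairing_symm_gen_mem_range e a b

noncomputable def schurToTriangle (hn : ∀ {i j : Fin k}, j ≤ i → n i ∣ n j) :
    SchurMultiplier G →* ZModTriangle n :=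
  schurLift (((triangleCocycle hn).comp e.toMonoidHom).compl₂ e.toMonoidHom)

theorem schurToTriangle_schurGen (hn : ∀ {i j : Fin k}, j ≤ i → n i ∣ n j) (i : Fin k)
    (j : Fin i.val) :
    schurToTriangle e hn (schurGen e i j) = Pi.mulSingle i (Pi.mulSingle j (.ofAdd 1)) := by
  have hji : Fin.castLE i.2.le j < i := j.2
  rw [schurToTriangle, schurGen, schurLift_commPairing]
  simp only [MonoidHom.compl₂_apply, MonoidHom.comp_apply, MulEquiv.coe_toMonoidHom,
    MulEquiv.apply_symm_apply, triangleCocycle_gen_gen, dif_pos hji, dif_neg hji.asymm, div_one]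
  rfl

theorem schurToTriangle_comp_triangleToSchur (hn : ∀ {i j : Fin k}, j ≤ i → n i ∣ n j) :
    (schurToTriangle e hn).comp (triangleToSchur e) = MonoidHom.id _ :=
  MonoidHom.functions_ext' _ _ _ fun i => MonoidHom.functions_ext' _ _ _ fun j =>
    MonoidHom.ext_mzmod <| by
      simp only [MonoidHom.comp_apply, MonoidHom.mulSingle_apply, triangleToSchur_mulSingle,
        schurToTriangle_schurGen, MonoidHom.id_apply]

end Abelian

theorem schurMultiplier_of_abelian_general (k : ℕ) (n : Fin k → ℕ)
    (hdvd : ∀ (i : ℕ) (hi : i + 1 < k), n ⟨i + 1, hi⟩ ∣ n ⟨i, Nat.lt_of_succ_lt hi⟩)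
    (G : Type*) [CommGroup G]
    (e : G ≃* ∀ i : Fin k, Multiplicative (ZMod (n i))) :
    Nonempty (SchurMultiplier G ≃*
      ∀ i : Fin k, (Fin i.val → Multiplicative (ZMod (n i)))) := by
  have hn : ∀ {i j : Fin k}, j ≤ i → n i ∣ n j := dvd_of_le_of_succ_dvd n hdvd
  have hinv : Function.LeftInverse (schurToTriangle e hn) (triangleToSchur e) :=
    DFunLike.congr_fun (schurToTriangle_comp_triangleToSchur e hn)
  exact ⟨(MulEquiv.ofBijective _ ⟨hinv.injective, triangleToSchur_surjective e⟩).symm⟩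

/-- if `G ≅ ℤ/n₁ ⊕ ⋯ ⊕ ℤ/n_k` with `n_{i+1} ∣ n_i` and `k ≥ 2`, then
`M(G) ≅ ℤ/n₂ ⊕ (ℤ/n₃)² ⊕ ⋯ ⊕ (ℤ/n_k)^{k-1}`. -/
theorem schurMultiplier_of_abelian (k : ℕ) (hk : 2 ≤ k) (n : Fin k → ℕ)
    (hpos : ∀ i, 0 < n i)
    (hdvd : ∀ (i : ℕ) (hi : i + 1 < k), n ⟨i + 1, hi⟩ ∣ n ⟨i, Nat.lt_of_succ_lt hi⟩)
    (G : Type*) [CommGroup G] [Finite G]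
    (e : G ≃* ∀ i : Fin k, Multiplicative (ZMod (n i))) :
    Nonempty (SchurMultiplier G ≃*
      ∀ i : Fin k, (Fin i.val → Multiplicative (ZMod (n i)))) :=
  schurMultiplier_of_abelian_general k n hdvd G e
end

section
/- Let G be a group of order p³ (p an odd prime) that is nonabelian and contains an element of order p². Then G is isomorphic to ⟨a, b ∣ a^{p²} = 1, b^p = 1, b⁻¹ab = a^{1+p}⟩. -/
/-- The relators `a^{p^{n-1}}`, `b^p`, `b⁻¹ a b (a^{1+p^{n-2}})⁻¹` defining the
modular group of order `p^n`, with `a = FreeGroup.of true` and `b = FreeGroup.of false`. -/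
def modularRels (p n : ℕ) : Set (FreeGroup Bool) :=
  { FreeGroup.of true ^ p ^ (n - 1),
    FreeGroup.of false ^ p,
    (FreeGroup.of false)⁻¹ * FreeGroup.of true * FreeGroup.of false *
      (FreeGroup.of true ^ (1 + p ^ (n - 2)))⁻¹ }

/-- The group `⟨a, b ∣ a^{p^{n-1}} = 1, b^p = 1, b⁻¹ a b = a^{1+p^{n-2}}⟩`. -/
def ModularGroup (p n : ℕ) : Type := PresentedGroup (modularRels p n)

instance (p n : ℕ) : Group (ModularGroup p n) :=
  inferInstanceAs (Group (PresentedGroup _))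

/-!
The cyclic subgroup `A = ⟨g⟩` has index `p`, so it is normal, and an element `c` not
commuting with `g` acts on it by `g ↦ g ^ k` with `k ^ p ≡ 1` but `k ≢ 1 (mod p²)`. Then
`k ≡ 1 + t p` with `t` prime to `p`, so a power of `c` acts by `g ↦ g ^ (1 + p)`. Its `p`-th
power lies in `A`, and multiplying it by a suitable power of `g` gives an element `b` of order
`p` with the same action: this uses `∑_{i<p} (1 + p) ^ i ≡ p (mod p²)`, which holds because `p`
is odd. Now `a ↦ g, b ↦ b` is a surjection onto `G` from the modular group, which has at most
`p³` elements because each of its elements is of the form `a ^ i * b ^ j`.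
-/

open Subgroup Pointwise Finset

namespace Subgroup
variable {G : Type*} [Group G]

theorem eq_top_of_lt_of_index_prime {H K : Subgroup G} (hH : H.index.Prime) (hHK : H < K) :
    K = ⊤ := by
  rcases (Nat.dvd_prime hH).mp (index_dvd_of_le hHK.le) with hK | hK
  · exact index_eq_one.mp hK
  · have hrel : H.relIndex K = 1 := by
      have := relIndex_mul_index hHK.le
      rw [hK] at this
      exact (Nat.mul_eq_right hH.ne_zero).mp this
    exact absurd (relIndex_eq_one.mp hrel) hHK.not_ge

theorem exists_not_commute_of_index_zpowers_prime {g : G} (hg : (zpowers g).index.Prime)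
    (hG : ∃ x y : G, x * y ≠ y * x) : ∃ c : G, g * c ≠ c * g := by
  obtain ⟨c, hc⟩ : ∃ c, c ∉ zpowers g := by
    by_contra! h
    exact hg.one_lt.ne' (index_eq_one.mpr ((eq_top_iff' _).mpr h))
  refine ⟨c, fun hgc => ?_⟩
  have hclosure : closure {g, c} = ⊤ := by
    refine eq_top_of_lt_of_index_prime hg (SetLike.lt_iff_le_and_exists.mpr ⟨?_, c, ?_, hc⟩)
    · exact zpowers_le.mpr (subset_closure (by simp))
    · exact subset_closure (by simp)
  have hcomm : ∀ x ∈ ({g, c} : Set G), ∀ y ∈ ({g, c} : Set G), x * y = y * x := by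
    simp only [Set.mem_insert_iff, Set.mem_singleton_iff]
    rintro x (rfl | rfl) y (rfl | rfl) <;> simp [hgc]
  obtain ⟨x, y, hxy⟩ := hG
  have hmem : ∀ z : G, z ∈ Set.centralizer (Set.centralizer {g, c}) := fun z =>
    closure_le_centralizer_centralizer _ (hclosure ▸ mem_top z)
  exact hxy (Set.centralizer_centralizer_comm_of_comm hcomm x (hmem x) y (hmem y))

theorem mem_normalizer_zpowers_of_conj_mem {a b : G} (ha : IsOfFinOrder a)
    (hab : b⁻¹ * a * b ∈ zpowers a) : b ∈ normalizer (zpowers a : Set G) := by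
  have : Finite (zpowers a) := (finite_zpowers.mpr ha).to_subtype
  rw [← inv_mem_iff, mem_normalizer_iff_map_conj_eq]
  refine eq_of_le_of_card_ge ?_ (card_map_of_injective (MulAut.conj b⁻¹).injective).ge
  rw [MonoidHom.map_zpowers, zpowers_le]
  simpa using hab

theorem zpowers_mul_zpowers_eq_univ {a b : G} (hgen : closure {a, b} = ⊤) (ha : IsOfFinOrder a)
    (hab : b⁻¹ * a * b ∈ zpowers a) :
    (zpowers a : Set G) * (zpowers b : Set G) = Set.univ := by
  rw [← coe_mul_of_right_le_normalizer_left _ _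
    (zpowers_le.mpr (mem_normalizer_zpowers_of_conj_mem ha hab))]
  have : zpowers a ⊔ zpowers b = ⊤ := by
    refine eq_top_iff.mpr (hgen ▸ closure_le _ |>.mpr ?_)
    simp only [Set.insert_subset_iff, Set.singleton_subset_iff, SetLike.mem_coe]
    exact ⟨mem_sup_left (mem_zpowers a), mem_sup_right (mem_zpowers b)⟩
  simp [this]

theorem finite_and_card_le_of_closure_pair_eq_top {a b : G} (hgen : closure {a, b} = ⊤)
    (ha : IsOfFinOrder a) (hb : IsOfFinOrder b) (hab : b⁻¹ * a * b ∈ zpowers a) :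
    Finite G ∧ Nat.card G ≤ orderOf a * orderOf b := by
  have huniv := zpowers_mul_zpowers_eq_univ hgen ha hab
  have hfin : (Set.univ : Set G).Finite :=
    huniv ▸ (finite_zpowers.mpr ha).mul (finite_zpowers.mpr hb)
  refine ⟨Set.finite_univ_iff.mp hfin, ?_⟩
  rw [← Nat.card_univ, ← huniv, ← Nat.card_zpowers, ← Nat.card_zpowers]
  exact Set.natCard_mul_le

end Subgroup

section Powers
variable {G : Type*} [Group G]

theorem inv_mul_zpow_mul (a b : G) (z : ℤ) : b⁻¹ * a ^ z * b = (b⁻¹ * a * b) ^ z := by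
  simpa using (conj_zpow (a := b⁻¹) (b := a) (i := z)).symm

theorem inv_pow_mul_mul_pow_of_inv_mul_mul {a b : G} {u : ℤ} (h : b⁻¹ * a * b = a ^ u)
    (j : ℕ) : (b ^ j)⁻¹ * a * b ^ j = a ^ u ^ j := by
  induction j with
  | zero => simp
  | succ j ih =>
    calc (b ^ (j + 1))⁻¹ * a * b ^ (j + 1) = b⁻¹ * ((b ^ j)⁻¹ * a * b ^ j) * b := by group
      _ = a ^ u ^ (j + 1) := by rw [ih, inv_mul_zpow_mul, h, ← zpow_mul, pow_succ']

theorem mul_pow_of_inv_mul_mul {x b : G} {u : ℤ} (h : b⁻¹ * x * b = x ^ u) (n : ℕ) :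
    (b * x) ^ n = b ^ n * x ^ (∑ i ∈ range n, u ^ i) := by
  induction n with
  | zero => simp
  | succ n ih =>
    calc (b * x) ^ (n + 1) = b ^ n * b * (b⁻¹ * x ^ (∑ i ∈ range n, u ^ i) * b) * x := by
          rw [pow_succ, ih]; group
      _ = b ^ (n + 1) * x ^ (∑ i ∈ range (n + 1), u ^ i) := by
          rw [inv_mul_zpow_mul, h, ← zpow_mul, ← pow_succ, mul_assoc, ← zpow_add_one,
            geom_sum_succ]

theorem zpow_eq_zpow_iff_intCast_eq {x : G} {m n : ℤ} :
    x ^ m = x ^ n ↔ (m : ZMod (orderOf x)) = n := by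
  rw [ZMod.intCast_eq_intCast_iff, zpow_eq_zpow_iff_modEq]

end Powers

namespace ZMod
variable {p : ℕ}

theorem natCast_self_sq : (p : ZMod (p ^ 2)) ^ 2 = 0 := by
  exact_mod_cast natCast_self (p ^ 2)

variable [Fact p.Prime]

theorem exists_eq_mul_of_castHom_eq_zero {x : ZMod (p ^ 2)}
    (hx : castHom (dvd_pow_self p two_ne_zero) (ZMod p) x = 0) : ∃ t, x = p * t := by
  rw [← natCast_zmod_val x, map_natCast, natCast_eq_zero_iff] at hx
  obtain ⟨t, ht⟩ := hx
  exact ⟨t, by rw [← natCast_zmod_val x, ht, Nat.cast_mul]⟩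

theorem exists_pow_eq_one_add_of_pow_eq_one {k : ZMod (p ^ 2)} (hk : k ^ p = 1) (hk1 : k ≠ 1) :
    ∃ s : ℕ, k ^ s = 1 + (p : ZMod (p ^ 2)) := by
  set π := castHom (dvd_pow_self p two_ne_zero) (ZMod p)
  have hπk : π k = 1 := by rw [← pow_card (π k), ← map_pow, hk, map_one]
  obtain ⟨t, rfl⟩ : ∃ t, k = 1 + p * t := by
    obtain ⟨t, ht⟩ := exists_eq_mul_of_castHom_eq_zero (x := k - 1) <| by
      rw [map_sub, hπk, map_one, sub_self]
    exact ⟨t, by rw [← ht]; ring⟩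
  have hπt : π t ≠ 0 := by
    intro h
    obtain ⟨t', rfl⟩ := exists_eq_mul_of_castHom_eq_zero h
    exact hk1 (by linear_combination (t' : ZMod (p ^ 2)) * natCast_self_sq)
  set s := ((π t)⁻¹).val
  obtain ⟨d, hd⟩ : ∃ d, s * t - 1 = p * d := exists_eq_mul_of_castHom_eq_zero <| by
    rw [map_sub, map_mul, map_natCast, natCast_zmod_val, inv_mul_cancel₀ hπt, map_one, sub_self]
  refine ⟨s, ?_⟩
  have hexpand := sq_dvd_add_pow_sub_sub ((p : ZMod (p ^ 2)) * t) 1 s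
  rw [mul_pow, natCast_self_sq, zero_mul, zero_dvd_iff, one_pow, one_pow] at hexpand
  linear_combination hexpand + (p : ZMod (p ^ 2)) * hd + d * natCast_self_sq

end ZMod

section CyclicSubgroupOfIndexP
variable {p : ℕ} [hp : Fact p.Prime] {G : Type*} [Group G] {g : G}

theorem index_zpowers_of_orderOf_eq (hcard : Nat.card G = p ^ 3) (hg : orderOf g = p ^ 2) :
    (zpowers g).index = p := by
  have h := card_mul_index (zpowers g)
  rw [Nat.card_zpowers, hg, hcard, pow_succ] at h
  exact Nat.eq_of_mul_eq_mul_left (by positivity [hp.out.pos]) h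

theorem normal_of_index_eq_of_card_eq_pow {H : Subgroup G} {n : ℕ} (hcard : Nat.card G = p ^ n)
    (hn : n ≠ 0) (hindex : H.index = p) : H.Normal :=
  normal_of_index_eq_minFac_card <| by rw [hindex, hcard, Nat.pow_minFac hn, hp.out.minFac_eq]

theorem pow_one_add_ne_self (hg : orderOf g = p ^ 2) : g ^ (1 + p) ≠ g := by
  intro h
  rw [pow_add, pow_one, mul_eq_left] at h
  have := Nat.le_of_dvd hp.out.pos (hg ▸ orderOf_dvd_of_pow_eq_one h)
  nlinarith [hp.out.two_le]

variable [(zpowers g).Normal]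

theorem exists_inv_mul_mul_eq_pow_one_add (hg : orderOf g = p ^ 2)
    (hindex : (zpowers g).index = p) {c : G} (hc : g * c ≠ c * g) :
    ∃ b : G, b⁻¹ * g * b = g ^ (1 + p) := by
  obtain ⟨k, hk⟩ := mem_zpowers_iff.mp (Normal.conj_mem' ‹_› g (mem_zpowers g) c)
  have hconj := inv_pow_mul_mul_pow_of_inv_mul_mul hk.symm
  have hkp : (k : ZMod (p ^ 2)) ^ p = 1 := by
    obtain ⟨z, hz⟩ := mem_zpowers_iff.mp (hindex ▸ pow_index_mem (zpowers g) c)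
    have hfix : (c ^ p)⁻¹ * g * c ^ p = g ^ (1 : ℤ) := by rw [← hz]; group
    have := zpow_eq_zpow_iff_intCast_eq.mp ((hconj p).symm.trans hfix)
    rwa [hg, Int.cast_pow, Int.cast_one] at this
  have hk1 : (k : ZMod (p ^ 2)) ≠ 1 := by
    intro h
    have hfix : c⁻¹ * (g * c) = g := by
      have : g ^ k = g ^ (1 : ℤ) := zpow_eq_zpow_iff_intCast_eq.mpr (by rw [hg, h, Int.cast_one])
      rw [← mul_assoc, ← hk, this, zpow_one]
    exact hc (inv_mul_eq_iff_eq_mul.mp hfix)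
  obtain ⟨s, hs⟩ := ZMod.exists_pow_eq_one_add_of_pow_eq_one hkp hk1
  refine ⟨c ^ s, ?_⟩
  rw [hconj s, ← zpow_natCast, zpow_eq_zpow_iff_intCast_eq, hg]
  push_cast
  exact hs

theorem exists_pow_eq_one_and_inv_mul_mul_eq (hodd : Odd p) (hg : orderOf g = p ^ 2)
    (hindex : (zpowers g).index = p) {b₁ : G} (hb₁ : b₁⁻¹ * g * b₁ = g ^ (1 + p)) :
    ∃ b : G, b ^ p = 1 ∧ b⁻¹ * g * b = g ^ (1 + p) := by
  have hb₁' : b₁⁻¹ * g * b₁ = g ^ (1 + p : ℤ) := by rw [hb₁]; norm_cast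
  obtain ⟨z, hz⟩ := mem_zpowers_iff.mp (hindex ▸ pow_index_mem (zpowers g) b₁)
  obtain ⟨m, rfl⟩ : (p : ℤ) ∣ z := by
    have hfix : g ^ (z * (1 + p)) = g ^ z := by
      calc g ^ (z * (1 + p)) = b₁⁻¹ * g ^ z * b₁ := by
            rw [inv_mul_zpow_mul, hb₁', ← zpow_mul, mul_comm]
        _ = g ^ z := by rw [hz]; group
    have h1 : g ^ (z * p) = 1 := by
      rw [show z * p = z * (1 + p) - z by ring, zpow_sub, hfix, mul_inv_cancel]
    have h2 := orderOf_dvd_iff_zpow_eq_one.mpr h1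
    rw [hg, Nat.cast_pow, sq] at h2
    exact Int.dvd_of_mul_dvd_mul_right (by exact_mod_cast hp.out.ne_zero) h2
  set x := g ^ (-m)
  have hx : b₁⁻¹ * x * b₁ = x ^ (1 + p : ℤ) := by
    rw [inv_mul_zpow_mul, hb₁', ← zpow_mul, ← zpow_mul, mul_comm]
  refine ⟨b₁ * x, ?_, ?_⟩
  · have hgeom := odd_sq_dvd_geom_sum₂_sub (1 : ℤ) 1 hodd
    simp only [mul_one, one_pow] at hgeom
    rw [mul_pow_of_inv_mul_mul hx, ← hz, ← zpow_mul, ← zpow_add,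
      ← orderOf_dvd_iff_zpow_eq_one, hg]
    push_cast
    exact (hgeom.mul_left (-m)).trans (dvd_of_eq (by ring))
  · calc (b₁ * x)⁻¹ * g * (b₁ * x) = x⁻¹ * (b₁⁻¹ * g * b₁) * x := by group
      _ = g ^ (1 + p) := by rw [hb₁]; simp only [x]; group

end CyclicSubgroupOfIndexP

namespace ModularGroup
variable {p n : ℕ}

def a : ModularGroup p n := PresentedGroup.of true

def b : ModularGroup p n := PresentedGroup.of false

theorem a_pow : (a : ModularGroup p n) ^ p ^ (n - 1) = 1 :=
  PresentedGroup.one_of_mem (by simp [modularRels])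

theorem b_pow : (b : ModularGroup p n) ^ p = 1 :=
  PresentedGroup.one_of_mem (by simp [modularRels])

theorem inv_b_mul_a_mul_b : b⁻¹ * a * b = (a : ModularGroup p n) ^ (1 + p ^ (n - 2)) :=
  mul_inv_eq_one.mp (PresentedGroup.one_of_mem (by simp [modularRels]))

theorem closure_a_b : closure {a, b} = (⊤ : Subgroup (ModularGroup p n)) := by
  refine Eq.trans ?_ (PresentedGroup.closure_range_of (modularRels p n))
  rw [Bool.range_eq, Set.pair_comm]
  rfl

theorem finite_and_card_le (hp : 0 < p) :
    Finite (ModularGroup p n) ∧ Nat.card (ModularGroup p n) ≤ p ^ (n - 1) * p := by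
  have ha : 0 < p ^ (n - 1) := pow_pos hp _
  obtain ⟨hfin, hcard⟩ := finite_and_card_le_of_closure_pair_eq_top closure_a_b
    (isOfFinOrder_iff_pow_eq_one.mpr ⟨_, ha, a_pow⟩)
    (isOfFinOrder_iff_pow_eq_one.mpr ⟨_, hp, b_pow⟩)
    (inv_b_mul_a_mul_b ▸ npow_mem_zpowers _ _)
  exact ⟨hfin, hcard.trans (Nat.mul_le_mul (orderOf_le_of_pow_eq_one ha a_pow)
    (orderOf_le_of_pow_eq_one hp b_pow))⟩

variable {H : Type*} [Group H]

def lift (x y : H) (hx : x ^ p ^ (n - 1) = 1) (hy : y ^ p = 1)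
    (hxy : y⁻¹ * x * y = x ^ (1 + p ^ (n - 2))) : ModularGroup p n →* H :=
  PresentedGroup.toGroup (f := fun i => bif i then x else y) <| by
    simp only [modularRels, Set.mem_insert_iff, Set.mem_singleton_iff]
    rintro r (rfl | rfl | rfl) <;> simp [hx, hy, hxy]

variable {x y : H} {hx : x ^ p ^ (n - 1) = 1} {hy : y ^ p = 1}
  {hxy : y⁻¹ * x * y = x ^ (1 + p ^ (n - 2))}

theorem lift_a : lift x y hx hy hxy a = x := PresentedGroup.toGroup.of _

theorem lift_b : lift x y hx hy hxy b = y := PresentedGroup.toGroup.of _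

end ModularGroup

/-- a nonabelian group of order `p³` (`p` an odd prime) containing an element of
order `p²` is isomorphic to `⟨a, b ∣ a^{p²} = 1, b^p = 1, b⁻¹ a b = a^{1+p}⟩`. -/
theorem nonabelian_p_cubed_iso_modular
    (p : ℕ) (hp : p.Prime) (hodd : Odd p)
    (G : Type*) [Group G] (hcard : Nat.card G = p ^ 3)
    (hnonab : ∃ a b : G, a * b ≠ b * a)
    (hg : ∃ g : G, orderOf g = p ^ 2) :
    Nonempty (G ≃* ModularGroup p 3) := by
  obtain ⟨g, hg⟩ := hg
  have : Fact p.Prime := ⟨hp⟩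
  have hindex := index_zpowers_of_orderOf_eq hcard hg
  have : (zpowers g).Normal := normal_of_index_eq_of_card_eq_pow hcard three_ne_zero hindex
  obtain ⟨c, hc⟩ := exists_not_commute_of_index_zpowers_prime (hindex ▸ hp) hnonab
  obtain ⟨b₁, hb₁⟩ := exists_inv_mul_mul_eq_pow_one_add hg hindex hc
  obtain ⟨b, hb, hbg⟩ := exists_pow_eq_one_and_inv_mul_mul_eq hodd hg hindex hb₁
  have hb_not_mem : b ∉ zpowers g := fun hmem => pow_one_add_ne_self hg <|
    hbg.symm.trans (by obtain ⟨z, rfl⟩ := mem_zpowers_iff.mp hmem; group)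
  let φ : ModularGroup p 3 →* G :=
    ModularGroup.lift g b (hg ▸ pow_orderOf_eq_one g) hb (by simpa using hbg)
  have hsurj : Function.Surjective φ := by
    refine MonoidHom.range_eq_top.mp (eq_top_of_lt_of_index_prime (hindex ▸ hp) ?_)
    exact SetLike.lt_iff_le_and_exists.mpr
      ⟨zpowers_le.mpr (MonoidHom.mem_range.mpr ⟨_, ModularGroup.lift_a⟩), b,
        MonoidHom.mem_range.mpr ⟨_, ModularGroup.lift_b⟩, hb_not_mem⟩
  obtain ⟨hfin, hcardM⟩ := ModularGroup.finite_and_card_le (p := p) (n := 3) hp.pos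
  have hcard_le : Nat.card (ModularGroup p 3) ≤ Nat.card G := by rwa [hcard, pow_succ _ 2]
  exact ⟨(MulEquiv.ofBijective φ (hsurj.bijective_of_nat_card_le hcard_le)).symm⟩
end

section
/- Let K be an imaginary quadratic field other than ℚ(√−3) and ℚ(i) (so O_K^× = {±1}), let p be an odd prime, and let 𝔮 be a prime ideal of O_K not above p with p ∣ N(𝔮) − 1. If p does not divide the class number of K, then for every n ≥ 1 the p-Sylow subgroup of the ray class group Cl_K(𝔮^n) is cyclic and nontrivial; in particular Cl_K(𝔮^n) has a unique subgroup isomorphic to ℤ/pℤ. -/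
/-!
Since `p ∤ h_K`, the `p`-part of `C` lies in the image of `(𝓞 K ⧸ 𝔮 ^ n)ˣ`, and every element of
`p`-power order there lifts to one of `p`-power order. The reduction `(𝓞 K ⧸ 𝔮 ^ n)ˣ → (𝓞 K ⧸ 𝔮)ˣ`
has kernel `1 + 𝔮 / 𝔮 ^ n`, which consists of unipotent elements and so has no `p`-torsion as `p`
is invertible; hence the `p`-part of `(𝓞 K ⧸ 𝔮 ^ n)ˣ` embeds into the cyclic group `(𝓞 K ⧸ 𝔮)ˣ`.
It is nontrivial because `p ∣ N 𝔮 - 1`, and it survives in `C` because the kernel of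
`(𝓞 K ⧸ 𝔮 ^ n)ˣ → C` is the image of `{±1}`, of order prime to the odd prime `p`.
-/

set_option synthInstance.maxHeartbeats 1000000

open NumberField Module

section NilpotentKernel

variable {R S : Type*} [CommRing R] [CommRing S] {f : R →+* S}

/-- Multiplying `(∑ uⁱ) (u - 1) = uᵐ - 1 = 0` by the inverse of `∑ uⁱ ≡ m` modulo the nilpotent
`u - 1` kills `u - 1`. -/
theorem eq_one_of_pow_eq_one_of_isNilpotent_sub_one {u : R} {m : ℕ} (hm : IsUnit (m : R))
    (hu : u ^ m = 1) (hnil : IsNilpotent (u - 1)) : u = 1 := by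
  have hgeom : (∑ i ∈ Finset.range m, u ^ i) * (u - 1) = 0 := by
    rw [geom_sum_mul, hu, sub_self]
  obtain ⟨w, hw⟩ : u - 1 ∣ ∑ i ∈ Finset.range m, u ^ i - m := by
    rw [show ∑ i ∈ Finset.range m, u ^ i - m = ∑ i ∈ Finset.range m, (u ^ i - 1 ^ i) by
      simp [Finset.sum_sub_distrib]]
    exact Finset.dvd_sum fun i _ => sub_dvd_pow_sub_pow u 1 i
  have hsum : IsUnit (∑ i ∈ Finset.range m, u ^ i) := by
    rw [← sub_add_cancel (∑ i ∈ Finset.range m, u ^ i) (m : R), hw, add_comm]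
    exact ((Commute.all _ w).isNilpotent_mul_right hnil).isUnit_add_left_of_commute hm
      (Commute.all _ _)
  rw [← sub_eq_zero]
  exact (hsum.mul_right_eq_zero).mp hgeom

theorem Units.eq_one_of_map_eq_one_of_pow_eq_one (hf : RingHom.ker f ≤ nilradical R) {u : Rˣ}
    {m : ℕ} (hm : IsUnit (m : R)) (hu : u ^ m = 1) (hfu : Units.map (f : R →* S) u = 1) :
    u = 1 := by
  refine Units.ext (eq_one_of_pow_eq_one_of_isNilpotent_sub_one hm ?_ (mem_nilradical.mp (hf ?_)))
  · simpa using congrArg Units.val hu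
  · have : f u = 1 := by simpa using congrArg Units.val hfu
    rw [RingHom.mem_ker, map_sub, this, map_one, sub_self]

theorem isCyclic_of_isPGroup_of_ker_le_nilradical [IsDomain S] (hf : RingHom.ker f ≤ nilradical R)
    {p : ℕ} (hp : IsUnit (p : R)) {P : Subgroup Rˣ} [Finite P] (hP : IsPGroup p P) :
    IsCyclic P := by
  refine isCyclic_of_injective_ringHom
    ((Units.coeHom S).comp ((Units.map (f : R →* S)).comp P.subtype)) ?_
  rw [injective_iff_map_eq_one]
  intro u hu
  obtain ⟨k, hk⟩ := hP u
  refine Subtype.ext (Units.eq_one_of_map_eq_one_of_pow_eq_one hf (m := p ^ k)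
    (by simpa using hp.pow k) (by simpa using congrArg Subtype.val hk) (Units.ext hu))

theorem units_map_surjective_of_ker_le_nilradical (hf : RingHom.ker f ≤ nilradical R)
    (hsurj : Function.Surjective f) : Function.Surjective (Units.map (f : R →* S)) := by
  intro v
  obtain ⟨r, hr⟩ := hsurj (v : S)
  obtain ⟨s, hs⟩ := hsurj (v⁻¹ : Sˣ)
  have hnil : IsNilpotent (r * s - 1) :=
    mem_nilradical.mp (hf (by simp [RingHom.mem_ker, hr, hs]))
  obtain ⟨⟨u, hu⟩, -⟩ : IsUnit r ∧ IsUnit s := by simpa using hnil.isUnit_add_one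
  exact ⟨u, Units.ext (by simp [hu, hr])⟩

end NilpotentKernel

theorem Ideal.Quotient.ker_factor_pow_le_nilradical {R : Type*} [CommRing R] (I : Ideal R)
    {n : ℕ} (hn : n ≠ 0) :
    RingHom.ker (Ideal.Quotient.factor (Ideal.pow_le_self hn : I ^ n ≤ I)) ≤
      nilradical (R ⧸ I ^ n) := by
  intro x hx
  obtain ⟨y, rfl⟩ := Ideal.Quotient.mk_surjective x
  rw [RingHom.mem_ker, Ideal.Quotient.factor_mk, Ideal.Quotient.eq_zero_iff_mem] at hx
  exact mem_nilradical.mpr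
    ⟨n, by rw [← map_pow, Ideal.Quotient.eq_zero_iff_mem]; exact Ideal.pow_mem_pow hx n⟩

theorem Subgroup.isCyclic_map {G G' : Type*} [Group G] [Group G'] (f : G →* G') (H : Subgroup G)
    [IsCyclic H] : IsCyclic (H.map f) :=
  isCyclic_of_surjective (f.subgroupMap H) (f.subgroupMap_surjective H)

theorem MonoidHom.eq_one_of_pow_prime_pow_eq_one {C B : Type*} [Group C] [Group B] [Finite B]
    (h : C →* B) {p : ℕ} (hp : p.Prime) (hB : ¬ p ∣ Nat.card B) {x : C} {k : ℕ}
    (hx : x ^ p ^ k = 1) : h x = 1 := by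
  have hcop : (orderOf (h x)).Coprime (Nat.card B) :=
    Nat.Coprime.coprime_dvd_left (orderOf_map_dvd h x |>.trans (orderOf_dvd_of_pow_eq_one hx))
      (Nat.Coprime.pow_left k ((hp.coprime_iff_not_dvd).mpr hB))
  exact orderOf_eq_one_iff.mp (hcop.eq_one_of_dvd (orderOf_dvd_natCard _))

/-- Write `orderOf z = pᵉ m` with `p ∤ m`; since `m` is prime to the order of `g z`, some power
`z ^ (m c)` still maps to `g z`, and it has order dividing `pᵉ`. -/
theorem mem_map_primaryComponent_of_pow_prime_pow_eq_one {A C : Type*} [CommGroup A] [Finite A]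
    [Group C] {p : ℕ} (hp : p.Prime) (g : A →* C) {x : C} (hx : x ∈ g.range) {k : ℕ}
    (hxk : x ^ p ^ k = 1) : x ∈ (CommGroup.primaryComponent A p).map g := by
  obtain ⟨z, rfl⟩ := hx
  obtain ⟨e, m, hpm, hz⟩ :=
    Nat.exists_eq_pow_mul_and_not_dvd (orderOf_pos z).ne' p hp.one_lt.ne'
  have hcop : m.Coprime (orderOf (g z)) :=
    Nat.Coprime.coprime_dvd_right (orderOf_dvd_of_pow_eq_one hxk)
      (Nat.Coprime.pow_left k ((hp.coprime_iff_not_dvd).mpr hpm)).symm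
  obtain ⟨c, hc⟩ := exists_pow_eq_self_of_coprime hcop
  refine ⟨z ^ (m * c), CommGroup.mem_primaryComponent.mpr ⟨e, ?_⟩, by rw [map_pow, pow_mul, hc]⟩
  rw [← pow_mul, show m * c * p ^ e = orderOf z * c by rw [hz]; ring, pow_mul,
    pow_orderOf_eq_one, one_pow]

theorem IsPGroup.le_map_primaryComponent {A C B : Type*} [CommGroup A] [Finite A] [Group C]
    [Group B] [Finite B] {p : ℕ} (hp : p.Prime) (g : A →* C) (h : C →* B)
    (hexact : h.ker ≤ g.range) (hB : ¬ p ∣ Nat.card B) {P : Subgroup C} (hP : IsPGroup p P) :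
    P ≤ (CommGroup.primaryComponent A p).map g := by
  intro x hx
  obtain ⟨k, hk⟩ := hP ⟨x, hx⟩
  have hxk : x ^ p ^ k = 1 := by simpa using congrArg Subtype.val hk
  exact mem_map_primaryComponent_of_pow_prime_pow_eq_one hp g
    (hexact (h.eq_one_of_pow_prime_pow_eq_one hp hB hxk)) hxk

theorem not_dvd_card_of_forall_pow_eq_one {G : Type*} [Group G] [Finite G] {p m : ℕ}
    [Fact p.Prime] (hpm : ¬ p ∣ m) (h : ∀ x : G, x ^ m = 1) : ¬ p ∣ Nat.card G := by
  intro hdvd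
  obtain ⟨x, hx⟩ := exists_prime_orderOf_dvd_card' p hdvd
  exact hpm (hx ▸ orderOf_dvd_of_pow_eq_one (h x))

theorem MonoidHom.dvd_card_of_not_dvd_card_ker {A C : Type*} [Group A] [Group C] {p : ℕ}
    (hp : p.Prime) (g : A →* C) (hA : p ∣ Nat.card A) (hker : ¬ p ∣ Nat.card g.ker) :
    p ∣ Nat.card C := by
  rw [← g.ker.card_mul_index, Subgroup.index_ker] at hA
  exact ((hp.dvd_mul.mp hA).resolve_left hker).trans (Subgroup.card_subgroup_dvd_card _)

/-- The subgroup of order `p` is the `p`-torsion `{x | x ^ p = 1}`: it is a cyclic group of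
exponent `p`, and it contains every subgroup of order `p`. -/
theorem existsUnique_subgroup_card_eq_prime {G : Type*} [CommGroup G] [Finite G] {p : ℕ}
    [Fact p.Prime] (hdvd : p ∣ Nat.card G)
    (hcyc : ∀ P : Subgroup G, IsPGroup p P → IsCyclic P) :
    ∃! H : Subgroup G, Nat.card H = p := by
  set Ω := (powMonoidHom p : G →* G).ker
  have hΩ : ∀ x : Ω, x ^ p = 1 := fun x => Subtype.ext x.2
  have := hcyc Ω fun x => ⟨1, by rw [pow_one, hΩ]⟩
  have hcardΩ : Nat.card Ω ∣ p :=
    IsCyclic.exponent_eq_card (α := Ω) ▸ Monoid.exponent_dvd_of_forall_pow_eq_one hΩ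
  have heq : ∀ H : Subgroup G, Nat.card H = p → H = Ω := by
    intro H hH
    refine Subgroup.eq_of_le_of_card_ge (fun x hx => ?_)
      (hH ▸ Nat.le_of_dvd (Fact.out : p.Prime).pos hcardΩ)
    have : (⟨x, hx⟩ : H) ^ p = 1 := hH ▸ pow_card_eq_one'
    show x ^ p = 1
    simpa using congrArg Subtype.val this
  obtain ⟨H, hH⟩ := Sylow.exists_subgroup_card_pow_prime p (n := 1) (by rwa [pow_one])
  rw [pow_one] at hH
  exact ⟨H, hH, fun H' hH' => (heq H' hH').trans (heq H hH).symm⟩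

theorem ray_class_group_unique_subgroup_p_general (K : Type*) [Field K] [NumberField K]
    (hunits : ∀ u : (𝓞 K)ˣ, u = 1 ∨ u = -1)
    (p : ℕ) (hp : p.Prime) (hodd : Odd p)
    (hclass : ¬ p ∣ Nat.card (ClassGroup (𝓞 K)))
    (𝔮 : Ideal (𝓞 K)) (hmax : 𝔮.IsMaximal) (hnotp : (p : 𝓞 K) ∉ 𝔮)
    (hdvd : p ∣ Ideal.absNorm 𝔮 - 1)
    (n : ℕ) (hn : 1 ≤ n)
    (C : Type*) [CommGroup C]
    (g : (𝓞 K ⧸ 𝔮 ^ n)ˣ →* C) (h : C →* ClassGroup (𝓞 K))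
    (hex1 : h.ker = g.range)
    (hex2 : g.ker = (Units.map (Ideal.Quotient.mk (𝔮 ^ n)).toMonoidHom).range) :
    (∀ P : Sylow p C, IsCyclic P ∧ Nontrivial P) ∧
    ∃! H : Subgroup C, Nat.card H = p := by
  have : Fact p.Prime := ⟨hp⟩
  have hn0 : n ≠ 0 := by omega
  have hq0 : 𝔮 ≠ ⊥ := Ring.ne_bot_of_isMaximal_of_not_isField hmax (RingOfIntegers.not_isField K)
  have : Finite (𝓞 K ⧸ 𝔮 ^ n) := Ideal.finiteQuotientOfFreeOfNeBot _ (pow_ne_zero n hq0)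
  let := Ideal.Quotient.field 𝔮
  have hπ := Ideal.Quotient.ker_factor_pow_le_nilradical 𝔮 hn0
  have hpA : p ∣ Nat.card (𝓞 K ⧸ 𝔮 ^ n)ˣ := by
    refine (?_ : p ∣ Nat.card (𝓞 K ⧸ 𝔮)ˣ).trans (Subgroup.card_dvd_of_surjective _
      (units_map_surjective_of_ker_le_nilradical hπ (Ideal.Quotient.factor_surjective _)))
    rwa [Nat.card_units, ← Submodule.cardQuot_apply, ← Ideal.absNorm_apply]
  have hcycA : IsCyclic (CommGroup.primaryComponent (𝓞 K ⧸ 𝔮 ^ n)ˣ p) :=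
    isCyclic_of_isPGroup_of_ker_le_nilradical hπ
      (by simpa using Ideal.Quotient.isUnit_mk_pow_of_notMem 𝔮 (n := n) hnotp)
      CommGroup.primaryComponent.isPGroup
  have hker : ¬ p ∣ Nat.card g.ker := by
    refine not_dvd_card_of_forall_pow_eq_one (m := 2)
      (fun h2 => hodd.not_two_dvd_nat ((Nat.prime_dvd_prime_iff_eq hp Nat.prime_two).mp h2 ▸ h2))
      fun x => Subtype.ext ?_
    obtain ⟨u, hu⟩ : (x : (𝓞 K ⧸ 𝔮 ^ n)ˣ) ∈
        (Units.map (Ideal.Quotient.mk (𝔮 ^ n)).toMonoidHom).range := hex2 ▸ x.2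
    rcases hunits u with rfl | rfl <;> simp [← hu]
  have hcyc : ∀ P : Subgroup C, IsPGroup p P → IsCyclic P := fun P hP =>
    have := Subgroup.isCyclic_map g (CommGroup.primaryComponent _ p)
    Subgroup.isCyclic_of_le (hP.le_map_primaryComponent hp g h hex1.le hclass)
  have : Finite C := h.finite_iff_finite_ker_range.mpr
    ⟨hex1 ▸ Finite.of_surjective _ g.rangeRestrict_surjective, inferInstance⟩
  have hpC : p ∣ Nat.card C := g.dvd_card_of_not_dvd_card_ker hp hpA hker
  exact ⟨fun P => ⟨hcyc P P.isPGroup', (Subgroup.nontrivial_iff_ne_bot _).mpr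
    (P.ne_bot_of_dvd_card hpC)⟩, existsUnique_subgroup_card_eq_prime hpC hcyc⟩

/-- let `K` be an imaginary quadratic field with unit group `{±1}` (i.e.
`K ≠ ℚ(i), ℚ(√-3)`), `p` an odd prime not dividing the class number of `K`, and `𝔮` a
prime of `K` not above `p` with `p ∣ N(𝔮) - 1`.  Then for every `n ≥ 1` and every
realization `C` of the ray class group `Cl_K(𝔮^n)` — i.e. any abelian group sitting in the
exact sequence `(𝓞 K)ˣ → (𝓞 K/𝔮^n)ˣ → C → Cl_K → 1` — the `p`-Sylow subgroup of `C` is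
cyclic and nontrivial; in particular `C` has a unique subgroup of order `p`
(necessarily isomorphic to `ℤ/pℤ`). -/
theorem ray_class_group_unique_subgroup_p (K : Type*) [Field K] [NumberField K]
    (hdeg : finrank ℚ K = 2) (himag : ∀ v : InfinitePlace K, v.IsComplex)
    (hunits : ∀ u : (𝓞 K)ˣ, u = 1 ∨ u = -1)
    (p : ℕ) (hp : p.Prime) (hodd : Odd p)
    (hclass : ¬ p ∣ Nat.card (ClassGroup (𝓞 K)))
    (𝔮 : Ideal (𝓞 K)) (hmax : 𝔮.IsMaximal) (hnotp : (p : 𝓞 K) ∉ 𝔮)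
    (hdvd : p ∣ Ideal.absNorm 𝔮 - 1)
    (n : ℕ) (hn : 1 ≤ n)
    (C : Type*) [CommGroup C]
    (g : (𝓞 K ⧸ 𝔮 ^ n)ˣ →* C) (h : C →* ClassGroup (𝓞 K))
    (hsurj : Function.Surjective h) (hex1 : h.ker = g.range)
    (hex2 : g.ker = (Units.map (Ideal.Quotient.mk (𝔮 ^ n)).toMonoidHom).range) :
    (∀ P : Sylow p C, IsCyclic P ∧ Nontrivial P) ∧
    ∃! H : Subgroup C, Nat.card H = p :=
  ray_class_group_unique_subgroup_p_general K hunits p hp hodd hclass 𝔮 hmax hnotp hdvd n hn C g h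
    hex1 hex2
end

section
/- Let p be an odd prime and G the pro-p group with presentation ⟨x, y ∣ x^{p^s}[x,y] = 1⟩ for some s ≥ 1. Then G is powerful. -/
/-! Since `s ≥ 1`, `x^{p^s}` is a `p`-th power, so the relator says that `[x, y]` lies in the
subgroup `N` generated by `p`-th powers. Thus the images of the two generators commute in
`G ⧸ N`, which is therefore abelian. -/

/-- The single relator `x^{p^s}[x, y]` (with `[x, y] = x⁻¹y⁻¹xy`), where
`x = FreeGroup.of true` and `y = FreeGroup.of false`. -/
def demushkinRel (p s : ℕ) : Set (FreeGroup Bool) :=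
  { FreeGroup.of true ^ p ^ s *
      ((FreeGroup.of true)⁻¹ * (FreeGroup.of false)⁻¹ * FreeGroup.of true *
        FreeGroup.of false) }

namespace Subgroup

variable {G : Type*} [Group G]

theorem closure_pow_normal (n : ℕ) : (closure {x : G | ∃ g, g ^ n = x}).Normal :=
  normalizer_eq_top_iff.mp <| top_le_iff.mp <| le_normalizer_closure_iff.mpr
    fun h _ _ ⟨g, hg⟩ => subset_closure ⟨h * g * h⁻¹, by rw [conj_pow, hg]⟩

theorem isMulCommutative_of_closure_eq_top {S : Set G} (hS : closure S = ⊤)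
    (hcomm : ∀ x ∈ S, ∀ y ∈ S, x * y = y * x) : IsMulCommutative G := by
  have := isMulCommutative_closure hcomm
  refine ⟨⟨fun x y => ?_⟩⟩
  have hx : x ∈ closure S := hS ▸ mem_top x
  have hy : y ∈ closure S := hS ▸ mem_top y
  exact congrArg Subtype.val (mul_comm' (⟨x, hx⟩ : closure S) ⟨y, hy⟩)

theorem commutator_le_of_closure_pair_eq_top {N : Subgroup G} [N.Normal] {a b : G}
    (hab : closure {a, b} = ⊤) (h : a⁻¹ * b⁻¹ * a * b ∈ N) : _root_.commutator G ≤ N := by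
  have hQ : closure {(a : G ⧸ N), (b : G ⧸ N)} = ⊤ := by
    rw [← Set.image_pair, ← QuotientGroup.coe_mk', ← MonoidHom.map_closure, hab,
      ← MonoidHom.range_eq_map, MonoidHom.range_eq_top]
    exact QuotientGroup.mk'_surjective N
  have hab_Q : (a : G ⧸ N) * b = b * a := by
    rw [← QuotientGroup.mk_mul, ← QuotientGroup.mk_mul, eq_comm, QuotientGroup.eq]
    simpa only [mul_inv_rev, mul_assoc] using h
  rw [← Normal.quotient_commutative_iff_commutator_le]
  refine isMulCommutative_of_closure_eq_top hQ ?_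
  rintro x (rfl | rfl) y (rfl | rfl)
  exacts [rfl, hab_Q, hab_Q.symm, rfl]

end Subgroup

namespace PresentedGroup

variable {p s : ℕ}

theorem demushkin_closure_eq_top :
    Subgroup.closure {(of true : PresentedGroup (demushkinRel p s)), of false} = ⊤ := by
  rw [Set.pair_comm, ← Bool.range_eq]
  exact closure_range_of _

theorem demushkin_relator_eq_one :
    (of true : PresentedGroup (demushkinRel p s)) ^ p ^ s *
      ((of true)⁻¹ * (of false)⁻¹ * of true * of false) = 1 :=
  one_of_mem rfl

end PresentedGroup

theorem presented_demushkin_powerful_general (p s : ℕ) (hs : 1 ≤ s) :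
    commutator (PresentedGroup (demushkinRel p s)) ≤
      Subgroup.closure {x : PresentedGroup (demushkinRel p s) |
        ∃ g : PresentedGroup (demushkinRel p s), g ^ p = x} := by
  have := Subgroup.closure_pow_normal (G := PresentedGroup (demushkinRel p s)) p
  refine Subgroup.commutator_le_of_closure_pair_eq_top PresentedGroup.demushkin_closure_eq_top ?_
  obtain ⟨t, rfl⟩ := Nat.exists_eq_add_of_le' hs
  rw [eq_inv_of_mul_eq_one_right PresentedGroup.demushkin_relator_eq_one, pow_succ, pow_mul]
  exact inv_mem (Subgroup.subset_closure ⟨_, rfl⟩)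

/-- for an odd prime `p` and `s ≥ 1`, the group with presentation
`⟨x, y ∣ x^{p^s}[x, y] = 1⟩` is powerful: its quotient by the subgroup generated by
`p`-th powers is abelian, i.e. all commutators are products of `p`-th powers. -/
theorem presented_demushkin_powerful (p s : ℕ) (hp : p.Prime) (hodd : Odd p)
    (hs : 1 ≤ s) :
    commutator (PresentedGroup (demushkinRel p s)) ≤
      Subgroup.closure {x : PresentedGroup (demushkinRel p s) |
        ∃ g : PresentedGroup (demushkinRel p s), g ^ p = x} :=
  presented_demushkin_powerful_general p s hs
end
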